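/- arXiv:1307.8185 — 2 statements merged into one kernel-verified Lean document; each statement's English description precedes it below -/
import Mathlib

section
/- Let X and Y be real symmetric n×n matrices with X positive definite, and let ψ_{X,Y} be the Gaussian ψ_{X,Y}(x) = (πħ)^{−n/4} (det X)^{1/4} e^{−((X + iY) x·x)/(2ħ)}. Then for all z = (x, p) ∈ ℝ²ⁿ, Wψ_{X,Y}(z) = (πħ)⁻ⁿ e^{−(G z·z)/ħ}, where G is the 2n×2n symmetric positive definite matrix with n×n blocks G = [[X + Y X⁻¹ Y, Y X⁻¹], [X⁻¹ Y, X⁻¹]]. -/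
open MeasureTheory Matrix

noncomputable section

/-- The standard symplectic matrix `J = [[0, I], [-I, 0]]` in `n×n` block form. -/
def stdJ (n : ℕ) : Matrix (Fin n ⊕ Fin n) (Fin n ⊕ Fin n) ℝ :=
  Matrix.fromBlocks 0 1 (-1) 0

/-- The Wigner transform `Wψ(x,p) = (2πhbar)⁻ⁿ ∫ e^{-i p·y/hbar} ψ(x+y/2) conj(ψ(x-y/2)) dy`. -/
def wigner (hbar : ℝ) (n : ℕ) (ψ : (Fin n → ℝ) → ℂ) (x p : Fin n → ℝ) : ℂ :=
  (((2 * Real.pi * hbar)⁻¹ ^ n : ℝ) : ℂ) *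
    ∫ y : Fin n → ℝ,
      Complex.exp (-(Complex.I * ((p ⬝ᵥ y : ℝ) : ℂ)) / (hbar : ℂ)) *
        ψ (x + (2 : ℝ)⁻¹ • y) * (starRingEnd ℂ) (ψ (x - (2 : ℝ)⁻¹ • y))

/-- The Wigner transform as a function of `z = (x, p) ∈ ℝ²ⁿ`. -/
def wignerZ (hbar : ℝ) (n : ℕ) (ψ : (Fin n → ℝ) → ℂ) (z : (Fin n ⊕ Fin n) → ℝ) : ℂ :=
  wigner hbar n ψ (z ∘ Sum.inl) (z ∘ Sum.inr)

/-- The cross-Wigner transform `W(ψ,φ)`. -/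
def crossWigner (hbar : ℝ) (n : ℕ) (ψ φ : (Fin n → ℝ) → ℂ) (x p : Fin n → ℝ) : ℂ :=
  (((2 * Real.pi * hbar)⁻¹ ^ n : ℝ) : ℂ) *
    ∫ y : Fin n → ℝ,
      Complex.exp (-(Complex.I * ((p ⬝ᵥ y : ℝ) : ℂ)) / (hbar : ℂ)) *
        ψ (x + (2 : ℝ)⁻¹ • y) * (starRingEnd ℂ) (φ (x - (2 : ℝ)⁻¹ • y))

/-- The cross-Wigner transform as a function of `z = (x, p) ∈ ℝ²ⁿ`. -/
def crossWignerZ (hbar : ℝ) (n : ℕ) (ψ φ : (Fin n → ℝ) → ℂ) (z : (Fin n ⊕ Fin n) → ℝ) : ℂ :=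
  crossWigner hbar n ψ φ (z ∘ Sum.inl) (z ∘ Sum.inr)

/-- The Gaussian `ψ_X(x) = (πhbar)^{-n/4} (det X)^{1/4} e^{-X x·x/(2hbar)}`. -/
def gauss (hbar : ℝ) (n : ℕ) (X : Matrix (Fin n) (Fin n) ℝ) (x : Fin n → ℝ) : ℂ :=
  (((Real.pi * hbar) ^ (-(n : ℝ) / 4) * X.det ^ ((1 : ℝ) / 4) : ℝ) : ℂ) *
    Complex.exp (-((X.mulVec x ⬝ᵥ x : ℝ) : ℂ) / (2 * (hbar : ℂ)))

/-- The complex Gaussian `ψ_{X,Y}(x) = (πhbar)^{-n/4} (det X)^{1/4} e^{-(X+iY) x·x/(2hbar)}`. -/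
def gaussXY (hbar : ℝ) (n : ℕ) (X Y : Matrix (Fin n) (Fin n) ℝ) (x : Fin n → ℝ) : ℂ :=
  (((Real.pi * hbar) ^ (-(n : ℝ) / 4) * X.det ^ ((1 : ℝ) / 4) : ℝ) : ℂ) *
    Complex.exp (-(((X.mulVec x ⬝ᵥ x : ℝ) : ℂ) + Complex.I * ((Y.mulVec x ⬝ᵥ x : ℝ) : ℂ)) /
      (2 * (hbar : ℂ)))

/-- The kernel `K_a(x,y) = (2πhbar)⁻ⁿ ∫ e^{i p·(x-y)/hbar} a((x+y)/2, p) dp` of the Weyl operator. -/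
def weylKernel (hbar : ℝ) (n : ℕ) (a : ((Fin n ⊕ Fin n) → ℝ) → ℂ) (x y : Fin n → ℝ) : ℂ :=
  (((2 * Real.pi * hbar)⁻¹ ^ n : ℝ) : ℂ) *
    ∫ p : Fin n → ℝ,
      Complex.exp (Complex.I * ((p ⬝ᵥ (x - y) : ℝ) : ℂ) / (hbar : ℂ)) *
        a (Sum.elim ((2 : ℝ)⁻¹ • (x + y)) p)

/-- The Weyl operator `Â_a` with symbol `a`, acting on a function `φ` on `ℝⁿ`. -/
def weyl (hbar : ℝ) (n : ℕ) (a : ((Fin n ⊕ Fin n) → ℝ) → ℂ) (φ : (Fin n → ℝ) → ℂ)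
    (x : Fin n → ℝ) : ℂ :=
  ∫ y : Fin n → ℝ, weylKernel hbar n a x y * φ y

/-- A symplectic ball: the image of a closed Euclidean ball `B²ⁿ(r)` centered at the origin
under a linear symplectic automorphism. -/
def IsSymplecticBall (n : ℕ) (B : Set (EuclideanSpace ℝ (Fin n ⊕ Fin n))) : Prop :=
  ∃ (S : Matrix (Fin n ⊕ Fin n) (Fin n ⊕ Fin n) ℝ) (r : ℝ), 0 < r ∧
    Sᵀ * stdJ n * S = stdJ n ∧
    B = (fun z : EuclideanSpace ℝ (Fin n ⊕ Fin n) =>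
      (WithLp.toLp 2 (S.mulVec z) : EuclideanSpace ℝ (Fin n ⊕ Fin n))) '' Metric.closedBall 0 r

/-!
The product `ψ(x + y/2) · conj ψ(x - y/2)` of the two Gaussians is again a Gaussian in `y`:
by the parallelogram law its modulus is `e^{-X x·x/ħ} e^{-X y·y/(4ħ)}`, and since `Y` is
symmetric the imaginary parts of the exponents leave only the linear phase `e^{-i Yx·y/ħ}`.
The Wigner transform is therefore the Fourier transform of a real Gaussian,
`∫ e^{-A y·y + i b·y} dy = (πⁿ / det A)^{1/2} e^{-A⁻¹ b·b / 4}`, taken at `A = X/(4ħ)` and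
`b = -(p + Yx)/ħ`; this formula follows from the standard Gaussian by substituting `A^{1/2} y`.
The exponent that comes out, `X x·x + X⁻¹(p + Yx)·(p + Yx)`, is `G z·z` with the square
completed.
-/

open Complex ComplexConjugate

namespace Matrix

section CommRing

variable {R ι : Type*} [CommRing R] [Fintype ι]

theorem IsSymm.mulVec_dotProduct {M : Matrix ι ι R} (hM : M.IsSymm) (u v : ι → R) :
    M *ᵥ u ⬝ᵥ v = u ⬝ᵥ M *ᵥ v := by
  rw [dotProduct_mulVec, ← vecMul_transpose, hM.eq]

theorem mulVec_add_dotProduct_add_add_mulVec_sub_dotProduct_sub (M : Matrix ι ι R)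
    (u v : ι → R) :
    M *ᵥ (u + v) ⬝ᵥ (u + v) + M *ᵥ (u - v) ⬝ᵥ (u - v) = 2 * (M *ᵥ u ⬝ᵥ u + M *ᵥ v ⬝ᵥ v) := by
  simp only [mulVec_add, mulVec_sub, add_dotProduct, dotProduct_add, sub_dotProduct,
    dotProduct_sub]
  ring

theorem IsSymm.mulVec_add_dotProduct_add_sub_mulVec_sub_dotProduct_sub {M : Matrix ι ι R}
    (hM : M.IsSymm) (u v : ι → R) :
    M *ᵥ (u + v) ⬝ᵥ (u + v) - M *ᵥ (u - v) ⬝ᵥ (u - v) = 4 * (M *ᵥ u ⬝ᵥ v) := by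
  simp only [mulVec_add, mulVec_sub, add_dotProduct, dotProduct_add, sub_dotProduct,
    dotProduct_sub, hM.mulVec_dotProduct v u, dotProduct_comm v (M *ᵥ u)]
  ring

theorem fromBlocks_mulVec_sumElim_dotProduct_sumElim {Y : Matrix ι ι R} (hY : Y.IsSymm)
    (X B : Matrix ι ι R) (x p : ι → R) :
    fromBlocks (X + Y * B * Y) (Y * B) (B * Y) B *ᵥ Sum.elim x p ⬝ᵥ Sum.elim x p =
      X *ᵥ x ⬝ᵥ x + B *ᵥ (p + Y *ᵥ x) ⬝ᵥ (p + Y *ᵥ x) := by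
  simp only [fromBlocks_mulVec, sumElim_dotProduct_sumElim, add_mulVec, ← mulVec_mulVec,
    mulVec_add, add_dotProduct, dotProduct_add, Sum.elim_comp_inl, Sum.elim_comp_inr,
    hY.mulVec_dotProduct _ x]
  rw [dotProduct_comm (B *ᵥ p) (Y *ᵥ x)]
  ring

end CommRing

variable {ι : Type*} [Fintype ι] [DecidableEq ι]

theorem integral_comp_mulVec {E : Type*} [NormedAddCommGroup E] [NormedSpace ℝ E]
    {M : Matrix ι ι ℝ} (hM : M.det ≠ 0) (f : (ι → ℝ) → E) :
    ∫ y, f (M *ᵥ y) = |M.det|⁻¹ • ∫ y, f y := by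
  have : Invertible M := invertibleOfIsUnitDet M (isUnit_iff_ne_zero.mpr hM)
  let e := (toLinearEquiv' M this).toContinuousLinearEquiv.toHomeomorph.toMeasurableEquiv
  have he : Measure.map e volume = Measure.map (toLin' M) volume := rfl
  rw [← abs_inv, ← ENNReal.toReal_ofReal (abs_nonneg _), ← integral_smul_measure,
    ← Real.map_matrix_volume_pi_eq_smul_volume_pi hM, ← he, integral_map_equiv]
  rfl

end Matrix

theorem integral_cexp_neg_dotProduct_self_add {ι : Type*} [Fintype ι] (c : ι → ℝ) :
    ∫ u : ι → ℝ, cexp (-((u ⬝ᵥ u : ℝ) : ℂ) + I * (c ⬝ᵥ u : ℝ)) =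
      (√(Real.pi ^ Fintype.card ι) : ℝ) * cexp (-((c ⬝ᵥ c : ℝ) : ℂ) / 4) := by
  have hsq : ∑ i, (I * c i) ^ 2 = -((c ⬝ᵥ c : ℝ) : ℂ) := by
    simp only [dotProduct, ofReal_sum, ofReal_mul, ← Finset.sum_neg_distrib]
    exact Finset.sum_congr rfl fun i _ ↦ by rw [mul_pow, I_sq]; ring
  have hpi : (Real.pi : ℂ) ^ (Fintype.card ι / 2 : ℂ) = (√(Real.pi ^ Fintype.card ι) : ℝ) := by
    rw [Real.sqrt_eq_rpow, ← Real.rpow_natCast, ← Real.rpow_mul Real.pi_pos.le,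
      ofReal_cpow Real.pi_pos.le]
    push_cast
    ring_nf
  convert GaussianFourier.integral_cexp_neg_mul_sum_add (b := 1) (by simp) (fun i ↦ I * c i)
    using 3 with u
  · simp [dotProduct, Finset.mul_sum, mul_assoc, sq]
  · rw [div_one, hpi]
  · rw [hsq, mul_one]

open scoped MatrixOrder in
theorem Matrix.PosDef.integral_cexp_neg_mulVec_dotProduct_add {ι : Type*} [Fintype ι]
    [DecidableEq ι] {A : Matrix ι ι ℝ} (hA : A.PosDef) (b : ι → ℝ) :
    ∫ y : ι → ℝ, cexp (-((A *ᵥ y ⬝ᵥ y : ℝ) : ℂ) + I * (b ⬝ᵥ y : ℝ)) =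
      (√(Real.pi ^ Fintype.card ι / A.det) : ℝ) * cexp (-((A⁻¹ *ᵥ b ⬝ᵥ b : ℝ) : ℂ) / 4) := by
  set S := CFC.sqrt A
  have hSS : S * S = A := CFC.sqrt_mul_sqrt_self A hA.posSemidef.nonneg
  have hS : S.IsSymm := isHermitian_iff_isSymm.mp (CFC.sqrt_nonneg A).posSemidef.isHermitian
  have hSdet : S.det = √A.det := by simp [S, hA.posSemidef.det_sqrt]
  have hSdet_pos : 0 < S.det := hSdet ▸ Real.sqrt_pos.mpr hA.det_pos
  have hSinv : S⁻¹ * S = 1 := nonsing_inv_mul S (isUnit_iff_ne_zero.mpr hSdet_pos.ne')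
  set c := S⁻¹ *ᵥ b
  have hquad (y : ι → ℝ) : A *ᵥ y ⬝ᵥ y = S *ᵥ y ⬝ᵥ S *ᵥ y := by
    rw [← hSS, ← mulVec_mulVec, hS.mulVec_dotProduct, dotProduct_comm]
  have hlin (y : ι → ℝ) : b ⬝ᵥ y = c ⬝ᵥ S *ᵥ y := by
    rw [hS.inv.mulVec_dotProduct, mulVec_mulVec, hSinv, one_mulVec]
  have hcc : A⁻¹ *ᵥ b ⬝ᵥ b = c ⬝ᵥ c := by
    rw [hS.inv.mulVec_dotProduct, mulVec_mulVec, ← mul_inv_rev, hSS, dotProduct_comm]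
  calc ∫ y : ι → ℝ, cexp (-((A *ᵥ y ⬝ᵥ y : ℝ) : ℂ) + I * (b ⬝ᵥ y : ℝ))
      = ∫ y : ι → ℝ, cexp (-((S *ᵥ y ⬝ᵥ S *ᵥ y : ℝ) : ℂ) + I * (c ⬝ᵥ S *ᵥ y : ℝ)) := by
        simp_rw [hquad, hlin]
    _ = _ := by
      rw [integral_comp_mulVec hSdet_pos.ne'
          (fun u ↦ cexp (-((u ⬝ᵥ u : ℝ) : ℂ) + I * (c ⬝ᵥ u : ℝ))),
        integral_cexp_neg_dotProduct_self_add, hcc, abs_of_pos hSdet_pos, hSdet,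
        Real.sqrt_div' _ hA.det_pos.le, real_smul, ← mul_assoc, ← ofReal_mul, inv_mul_eq_div]

def gaussConst (hbar : ℝ) (n : ℕ) (X : Matrix (Fin n) (Fin n) ℝ) : ℝ :=
  (Real.pi * hbar) ^ (-(n : ℝ) / 4) * X.det ^ ((1 : ℝ) / 4)

theorem gaussXY_mul_conj_gaussXY (hbar : ℝ) (n : ℕ) (X Y : Matrix (Fin n) (Fin n) ℝ)
    (u v : Fin n → ℝ) :
    gaussXY hbar n X Y u * conj (gaussXY hbar n X Y v) =
      (gaussConst hbar n X : ℂ) ^ 2 * cexp (-(((X *ᵥ u ⬝ᵥ u + X *ᵥ v ⬝ᵥ v : ℝ) : ℂ) +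
        I * ((Y *ᵥ u ⬝ᵥ u - Y *ᵥ v ⬝ᵥ v : ℝ) : ℂ)) / (2 * hbar)) := by
  simp only [gaussXY, map_mul, conj_ofReal, ← Complex.exp_conj, map_div₀, map_neg, map_add, conj_I,
    map_ofNat]
  rw [mul_mul_mul_comm, ← exp_add, ← sq, gaussConst]
  congr 2
  push_cast
  ring

theorem wigner_integrand_gaussXY {hbar : ℝ} {n : ℕ} {X Y : Matrix (Fin n) (Fin n) ℝ}
    (hY : Y.IsSymm) (x p y : Fin n → ℝ) :
    cexp (-(I * ((p ⬝ᵥ y : ℝ) : ℂ)) / hbar) * gaussXY hbar n X Y (x + (2 : ℝ)⁻¹ • y) *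
        conj (gaussXY hbar n X Y (x - (2 : ℝ)⁻¹ • y)) =
      (gaussConst hbar n X : ℂ) ^ 2 * cexp (-((X *ᵥ x ⬝ᵥ x : ℝ) : ℂ) / hbar) *
        cexp (-((((4 * hbar)⁻¹ • X) *ᵥ y ⬝ᵥ y : ℝ) : ℂ) +
          I * ((-hbar⁻¹ • (p + Y *ᵥ x)) ⬝ᵥ y : ℝ)) := by
  rw [mul_assoc, gaussXY_mul_conj_gaussXY, mulVec_add_dotProduct_add_add_mulVec_sub_dotProduct_sub,
    hY.mulVec_add_dotProduct_add_sub_mulVec_sub_dotProduct_sub, mul_left_comm, mul_assoc,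
    ← Complex.exp_add, ← Complex.exp_add]
  congr 2
  simp only [mulVec_smul, smul_mulVec, dotProduct_smul, smul_dotProduct, smul_eq_mul,
    add_dotProduct]
  push_cast
  field_simp
  ring

theorem gaussConst_pow_four {hbar : ℝ} (hhbar : 0 < hbar) {n : ℕ} {X : Matrix (Fin n) (Fin n) ℝ}
    (hX : 0 ≤ X.det) : gaussConst hbar n X ^ 4 = X.det / (Real.pi * hbar) ^ n := by
  have hpi : 0 ≤ Real.pi * hbar := by positivity
  rw [gaussConst, mul_pow, ← Real.rpow_natCast, ← Real.rpow_natCast (X.det ^ _),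
    ← Real.rpow_mul hpi, ← Real.rpow_mul hX, show -(n : ℝ) / 4 * (4 : ℕ) = -n by push_cast; ring,
    show (1 : ℝ) / 4 * (4 : ℕ) = 1 by norm_num, Real.rpow_one, Real.rpow_neg hpi,
    Real.rpow_natCast, div_eq_inv_mul]

theorem gaussConst_sq_mul_sqrt {hbar : ℝ} (hhbar : 0 < hbar) {n : ℕ}
    {X : Matrix (Fin n) (Fin n) ℝ} (hX : 0 < X.det) :
    (2 * Real.pi * hbar)⁻¹ ^ n * gaussConst hbar n X ^ 2 *
        √(Real.pi ^ n / ((4 * hbar)⁻¹ ^ n * X.det)) = (Real.pi * hbar)⁻¹ ^ n := by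
  have := Real.pi_pos
  rw [← sq_eq_sq₀ (by positivity) (by positivity), mul_pow, mul_pow,
    Real.sq_sqrt (by positivity), ← pow_mul (gaussConst _ _ _), gaussConst_pow_four hhbar hX.le]
  simp only [← pow_mul, inv_pow, mul_pow, show (4 : ℝ) ^ n = 2 ^ n * 2 ^ n by
    rw [← mul_pow]; norm_num]
  field_simp
  ring

theorem wigner_gaussXY_general (hbar : ℝ) (hhbar : 0 < hbar) (n : ℕ)
    (X Y : Matrix (Fin n) (Fin n) ℝ) (hYs : Y.IsSymm) (hX : X.PosDef)
    (x p : Fin n → ℝ) :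
    wigner hbar n (gaussXY hbar n X Y) x p =
      (((Real.pi * hbar)⁻¹ ^ n : ℝ) : ℂ) *
        Complex.exp (-(((Matrix.fromBlocks (X + Y * X⁻¹ * Y) (Y * X⁻¹) (X⁻¹ * Y) X⁻¹).mulVec
          (Sum.elim x p) ⬝ᵥ Sum.elim x p : ℝ) : ℂ) / (hbar : ℂ)) := by
  have hA : ((4 * hbar)⁻¹ • X).PosDef := hX.smul (by positivity)
  have hAdet : ((4 * hbar)⁻¹ • X).det = (4 * hbar)⁻¹ ^ n * X.det := by
    rw [det_smul, Fintype.card_fin]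
  have hAinv : ((4 * hbar)⁻¹ • X)⁻¹ = (4 * hbar) • X⁻¹ := by
    have : Invertible (4 * hbar)⁻¹ := invertibleOfNonzero (by positivity)
    rw [Matrix.inv_smul _ _ hX.det_pos.ne'.isUnit, invOf_eq_inv, inv_inv]
  simp_rw [wigner, wigner_integrand_gaussXY hYs, integral_const_mul,
    hA.integral_cexp_neg_mulVec_dotProduct_add, Fintype.card_fin, hAdet, hAinv,
    fromBlocks_mulVec_sumElim_dotProduct_sumElim hYs, ← gaussConst_sq_mul_sqrt hhbar hX.det_pos]
  have hexp : (-(((4 * hbar) • X⁻¹) *ᵥ (-hbar⁻¹ • (p + Y *ᵥ x)) ⬝ᵥ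
      -hbar⁻¹ • (p + Y *ᵥ x) : ℝ) : ℂ) / 4 =
      -((X⁻¹ *ᵥ (p + Y *ᵥ x) ⬝ᵥ (p + Y *ᵥ x) : ℝ) : ℂ) / hbar := by
    simp only [smul_mulVec, mulVec_smul, smul_dotProduct, dotProduct_smul, smul_eq_mul]
    push_cast
    field_simp
  rw [hexp, ofReal_add, neg_add, add_div, Complex.exp_add]
  push_cast
  ring

/-- The Wigner transform of the complex Gaussian `ψ_{X,Y}` is
`(πħ)⁻ⁿ e^{-G z·z/ħ}` with `G = [[X + Y X⁻¹ Y, Y X⁻¹], [X⁻¹ Y, X⁻¹]]`. -/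
theorem wigner_gaussXY (hbar : ℝ) (hhbar : 0 < hbar) (n : ℕ)
    (X Y : Matrix (Fin n) (Fin n) ℝ) (hXs : X.IsSymm) (hYs : Y.IsSymm) (hX : X.PosDef)
    (x p : Fin n → ℝ) :
    wigner hbar n (gaussXY hbar n X Y) x p =
      (((Real.pi * hbar)⁻¹ ^ n : ℝ) : ℂ) *
        Complex.exp (-(((Matrix.fromBlocks (X + Y * X⁻¹ * Y) (Y * X⁻¹) (X⁻¹ * Y) X⁻¹).mulVec
          (Sum.elim x p) ⬝ᵥ Sum.elim x p : ℝ) : ℂ) / (hbar : ℂ)) :=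
  wigner_gaussXY_general hbar hhbar n X Y hYs hX x p
end
end

section
/- Let G be a real symmetric positive definite 2n×2n matrix and let Ω_G = {z ∈ ℝ²ⁿ : G z·z ≤ 1}. Then Ω_G is a symplectic ball if and only if there exists λ > 0 such that λG is symplectic. -/
open MeasureTheory Matrix

noncomputable section

/-!
The symplectic ball `S(B(r))` is the ellipsoid of `r⁻² (S⁻¹)ᵀ S⁻¹`, and a positive definite
matrix is determined by its ellipsoid. So `Ω_G = S(B(r))` forces `r² G = (S⁻¹)ᵀ S⁻¹`, which is
symplectic. Conversely, if `M = λ G` is symplectic, then so is its positive square root `R`, and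
`Ω_G = R⁻¹(B(√λ))`.
-/

open scoped MatrixOrder

section Symplectic

variable {l R : Type*} [Fintype l] [DecidableEq l] [CommRing R]

lemma SymplecticGroup.nonsing_inv_mem {A : Matrix (l ⊕ l) (l ⊕ l) R}
    (hA : A ∈ symplecticGroup l R) : A⁻¹ ∈ symplecticGroup l R := by
  simpa only [SymplecticGroup.coe_inv'] using (⟨A, hA⟩⁻¹ : symplecticGroup l R).2

lemma SymplecticGroup.mem_iff_nonsing_inv_eq {A : Matrix (l ⊕ l) (l ⊕ l) R} (hA : IsUnit A.det) :
    A ∈ symplecticGroup l R ↔ A⁻¹ = -J l R * Aᵀ * J l R := by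
  refine ⟨SymplecticGroup.inv_eq_symplectic_inv A, fun h => SymplecticGroup.mem_iff.2 ?_⟩
  have hAJ : A * J l R * Aᵀ * J l R = -1 := by
    rw [← neg_eq_iff_eq_neg, ← Matrix.mul_neg, ← Matrix.mul_nonsing_inv A hA, h]
    simp only [Matrix.mul_assoc, Matrix.neg_mul, Matrix.mul_neg]
  calc A * J l R * Aᵀ = A * J l R * Aᵀ * J l R * (-J l R) := by
        rw [Matrix.mul_neg, Matrix.mul_assoc _ (J l R) (J l R), J_squared, Matrix.mul_neg,
          Matrix.mul_one, neg_neg]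
    _ = J l R := by rw [hAJ, neg_mul_neg, Matrix.one_mul]

end Symplectic

lemma stdJ_eq_neg_J (n : ℕ) : stdJ n = -J (Fin n) ℝ := by
  rw [stdJ, J, fromBlocks_neg]
  simp

lemma transpose_mul_stdJ_mul_eq_stdJ_iff {n : ℕ} {S : Matrix (Fin n ⊕ Fin n) (Fin n ⊕ Fin n) ℝ} :
    Sᵀ * stdJ n * S = stdJ n ↔ S ∈ symplecticGroup (Fin n) ℝ := by
  rw [SymplecticGroup.mem_iff', stdJ_eq_neg_J, Matrix.mul_neg, Matrix.neg_mul, neg_inj]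

lemma cfcSqrt_mem_symplecticGroup {l : Type*} [Fintype l] [DecidableEq l]
    {M : Matrix (l ⊕ l) (l ⊕ l) ℝ} (hM : M.PosDef) (hMs : M ∈ symplecticGroup l ℝ) :
    CFC.sqrt M ∈ symplecticGroup l ℝ := by
  have hS : (CFC.sqrt M).PosSemidef := (CFC.sqrt_nonneg M).posSemidef
  have hSdet : IsUnit (CFC.sqrt M).det :=
    (isUnit_iff_isUnit_det _).1 ((CFC.isUnit_sqrt_iff M hM.posSemidef.nonneg).2 hM.isUnit)
  have hJ : (J l ℝ)ᴴ = -J l ℝ := by rw [conjTranspose_eq_transpose_of_trivial, J_transpose]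
  -- `M⁻¹ = Jᵀ M J` and `J` is orthogonal, so `√(M⁻¹) = Jᵀ √M J`.
  rw [SymplecticGroup.mem_iff_nonsing_inv_eq hSdet, (isHermitian_iff_isSymm.1 hS.1).eq,
    hM.posSemidef.inv_sqrt,
    (SymplecticGroup.mem_iff_nonsing_inv_eq ((isUnit_iff_isUnit_det M).1 hM.isUnit)).1 hMs,
    (isHermitian_iff_isSymm.1 hM.1).eq]
  refine CFC.sqrt_unique ?_ (hJ ▸ hS.conjTranspose_mul_mul_same (J l ℝ)).nonneg
  calc -J l ℝ * CFC.sqrt M * J l ℝ * (-J l ℝ * CFC.sqrt M * J l ℝ)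
      = -J l ℝ * CFC.sqrt M * (J l ℝ * -J l ℝ) * CFC.sqrt M * J l ℝ := by
        simp only [Matrix.mul_assoc]
    _ = -J l ℝ * (CFC.sqrt M * CFC.sqrt M) * J l ℝ := by
        rw [Matrix.mul_neg, J_squared, neg_neg, Matrix.mul_one]
        simp only [Matrix.mul_assoc]
    _ = -J l ℝ * M * J l ℝ := by rw [CFC.sqrt_mul_sqrt_self M hM.posSemidef.nonneg]

section Ellipsoid

variable {ι : Type*} [Fintype ι]

def ellipsoid (A : Matrix ι ι ℝ) : Set (EuclideanSpace ℝ ι) :=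
  {z | A *ᵥ z.ofLp ⬝ᵥ z.ofLp ≤ 1}

lemma dotProduct_mulVec_smul_self {R : Type*} [CommSemiring R] (A : Matrix ι ι R) (c : R)
    (z : ι → R) :
    A *ᵥ (c • z) ⬝ᵥ (c • z) = c ^ 2 * (A *ᵥ z ⬝ᵥ z) := by
  rw [mulVec_smul, smul_dotProduct, dotProduct_smul, smul_eq_mul, smul_eq_mul]
  ring

lemma dotProduct_mulVec_self_le_of_ellipsoid_subset {A B : Matrix ι ι ℝ} (hA : A.PosDef)
    (h : ellipsoid A ⊆ ellipsoid B) (z : ι → ℝ) : B *ᵥ z ⬝ᵥ z ≤ A *ᵥ z ⬝ᵥ z := by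
  rcases eq_or_ne z 0 with rfl | hz
  · simp
  have ha : 0 < A *ᵥ z ⬝ᵥ z := by
    simpa only [star_trivial, dotProduct_comm] using hA.dotProduct_mulVec_pos hz
  set c := (√(A *ᵥ z ⬝ᵥ z))⁻¹
  have hc : c ^ 2 = (A *ᵥ z ⬝ᵥ z)⁻¹ := by rw [inv_pow, Real.sq_sqrt ha.le]
  have hcz : WithLp.toLp 2 (c • z) ∈ ellipsoid B := h <| by
    change A *ᵥ (c • z) ⬝ᵥ (c • z) ≤ 1
    rw [dotProduct_mulVec_smul_self, hc, inv_mul_cancel₀ ha.ne']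
  change B *ᵥ (c • z) ⬝ᵥ (c • z) ≤ 1 at hcz
  rwa [dotProduct_mulVec_smul_self, hc, inv_mul_le_iff₀ ha, mul_one] at hcz

variable [DecidableEq ι]

lemma eq_of_forall_dotProduct_mulVec_self_eq {A B : Matrix ι ι ℝ} (hA : A.IsHermitian)
    (hB : B.IsHermitian) (h : ∀ z, A *ᵥ z ⬝ᵥ z = B *ᵥ z ⬝ᵥ z) : A = B := by
  rw [← sub_eq_zero, ← toEuclideanLin.map_eq_zero_iff,
    ← (isSymmetric_toEuclideanLin_iff.2 (hA.sub hB)).inner_map_self_eq_zero]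
  intro z
  simp only [map_sub, LinearMap.sub_apply, EuclideanSpace.inner_eq_star_dotProduct,
    WithLp.ofLp_sub, ofLp_toLpLin, toLin'_apply, star_trivial, dotProduct_sub]
  rw [dotProduct_comm, h, dotProduct_comm, sub_self]

lemma Matrix.PosDef.eq_of_ellipsoid_eq {A B : Matrix ι ι ℝ} (hA : A.PosDef) (hB : B.PosDef)
    (h : ellipsoid A = ellipsoid B) : A = B :=
  eq_of_forall_dotProduct_mulVec_self_eq hA.1 hB.1 fun z =>
    le_antisymm (dotProduct_mulVec_self_le_of_ellipsoid_subset hB h.ge z)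
      (dotProduct_mulVec_self_le_of_ellipsoid_subset hA h.le z)

lemma image_closedBall_eq_ellipsoid {S : Matrix ι ι ℝ} (hS : IsUnit S.det) {r : ℝ} (hr : 0 < r) :
    (fun z : EuclideanSpace ℝ ι => WithLp.toLp 2 (S *ᵥ z.ofLp)) '' Metric.closedBall 0 r =
      ellipsoid ((r ^ 2)⁻¹ • ((S⁻¹)ᵀ * S⁻¹)) := by
  rw [Set.image_eq_preimage_of_inverse (g := fun z => WithLp.toLp 2 (S⁻¹ *ᵥ z.ofLp))
    (fun z => by simp [mulVec_mulVec, nonsing_inv_mul _ hS])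
    (fun z => by simp [mulVec_mulVec, mul_nonsing_inv _ hS])]
  ext z
  have hnorm : ‖WithLp.toLp 2 (S⁻¹ *ᵥ z.ofLp)‖ ^ 2 = ((S⁻¹)ᵀ * S⁻¹) *ᵥ z.ofLp ⬝ᵥ z.ofLp := by
    rw [← real_inner_self_eq_norm_sq, EuclideanSpace.inner_eq_star_dotProduct, star_trivial,
      ← mulVec_mulVec, mulVec_transpose, dotProduct_mulVec, dotProduct_comm]
  rw [Set.mem_preimage, mem_closedBall_zero_iff, ← sq_le_sq₀ (norm_nonneg _) hr.le, hnorm,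
    ellipsoid, Set.mem_ofPred_eq, smul_mulVec, smul_dotProduct, smul_eq_mul,
    inv_mul_le_iff₀ (by positivity), mul_one]

end Ellipsoid

theorem ellipsoid_isSymplecticBall_iff_general (n : ℕ)
    (G : Matrix (Fin n ⊕ Fin n) (Fin n ⊕ Fin n) ℝ) (hG : G.PosDef) :
    IsSymplecticBall n {z : EuclideanSpace ℝ (Fin n ⊕ Fin n) | G.mulVec z ⬝ᵥ z ≤ 1} ↔
      ∃ lam : ℝ, 0 < lam ∧ (lam • G)ᵀ * stdJ n * (lam • G) = stdJ n := by
  change IsSymplecticBall n (ellipsoid G) ↔ _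
  simp only [transpose_mul_stdJ_mul_eq_stdJ_iff, IsSymplecticBall]
  constructor
  · rintro ⟨S, r, hr, hS, hball⟩
    have hSdet : IsUnit S.det := SymplecticGroup.symplectic_det hS
    have hSinv : Function.Injective S⁻¹.mulVec := mulVec_injective_iff_isUnit.2 <|
      (isUnit_iff_isUnit_det _).2 (isUnit_nonsing_inv_det S hSdet)
    have hGS : G = (r ^ 2)⁻¹ • ((S⁻¹)ᵀ * S⁻¹) :=
      hG.eq_of_ellipsoid_eq ((PosDef.conjTranspose_mul_self _ hSinv).smul (by positivity))
        (hball.trans (image_closedBall_eq_ellipsoid hSdet hr))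
    refine ⟨r ^ 2, by positivity, ?_⟩
    rw [hGS, smul_smul, mul_inv_cancel₀ (by positivity), one_smul]
    exact mul_mem (SymplecticGroup.transpose_mem (SymplecticGroup.nonsing_inv_mem hS))
      (SymplecticGroup.nonsing_inv_mem hS)
  · rintro ⟨lam, hlam, hsymp⟩
    have hM : (lam • G).PosDef := hG.smul hlam
    have hR := cfcSqrt_mem_symplecticGroup hM hsymp
    have hRdet : IsUnit (CFC.sqrt (lam • G)).det := SymplecticGroup.symplectic_det hR
    refine ⟨(CFC.sqrt (lam • G))⁻¹, √lam, Real.sqrt_pos.2 hlam,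
      SymplecticGroup.nonsing_inv_mem hR, ?_⟩
    rw [image_closedBall_eq_ellipsoid (isUnit_nonsing_inv_det _ hRdet) (Real.sqrt_pos.2 hlam),
      nonsing_inv_nonsing_inv _ hRdet,
      (isHermitian_iff_isSymm.1 (CFC.sqrt_nonneg _).posSemidef.1).eq,
      CFC.sqrt_mul_sqrt_self _ hM.posSemidef.nonneg, Real.sq_sqrt hlam.le, smul_smul,
      inv_mul_cancel₀ hlam.ne', one_smul]

/-- The ellipsoid `Ω_G = {z : G z·z ≤ 1}` (`G` symmetric positive definite) is
a symplectic ball iff `λG` is symplectic for some `λ > 0`. -/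
theorem ellipsoid_isSymplecticBall_iff (n : ℕ)
    (G : Matrix (Fin n ⊕ Fin n) (Fin n ⊕ Fin n) ℝ) (hGs : G.IsSymm) (hG : G.PosDef) :
    IsSymplecticBall n {z : EuclideanSpace ℝ (Fin n ⊕ Fin n) | G.mulVec z ⬝ᵥ z ≤ 1} ↔
      ∃ lam : ℝ, 0 < lam ∧ (lam • G)ᵀ * stdJ n * (lam • G) = stdJ n :=
  ellipsoid_isSymplecticBall_iff_general n G hG

end
end
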